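/- Let N > 1, κ ∈ {−1, 0, 1}, K = κ(N−1), and D > 0, with D < π in the case κ = 1. For a ∈ (0,D) let m_a = Vol_{K,N}(D)·h^a_{K,N,D}·𝓛¹ restricted to [0,D]. Then there exists ā > 0, depending only on N, K, D, such that for every a ∈ (0, ā) and every r ∈ (0, a]: m_a([0,r]) / m_a([0,D]) ≤ r. -/
import Mathlib


open MeasureTheory Filter Set

/-- The function `s_κ`. -/
noncomputable def sK (κ θ : ℝ) : ℝ :=
  if 0 < κ then Real.sin (Real.sqrt κ * θ) / Real.sqrt κ
  else if κ = 0 then θ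
  else Real.sinh (Real.sqrt (-κ) * θ) / Real.sqrt (-κ)

/-- `k_D = ∫₀^D s_κ(t)^(N-1) dt`. -/
noncomputable def kD (κ N D : ℝ) : ℝ := ∫ t in (0:ℝ)..D, sK κ t ^ (N - 1)

/-- The function `f_{K,N,D}` (with `K = κ(N-1)`). -/
noncomputable def fKND (κ N D x : ℝ) : ℝ :=
  ((∫ y in (0:ℝ)..x, (sK κ (D - y) / sK κ (D - x)) ^ (N - 1)) +
    ∫ y in x..D, (sK κ y / sK κ x) ^ (N - 1))⁻¹

/-- The model density `h^a_{K,N,D}` (with `K = κ(N-1)`). -/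
noncomputable def hKND (κ N D a x : ℝ) : ℝ :=
  if x ≤ a then fKND κ N D a * (sK κ (D - x) / sK κ (D - a)) ^ (N - 1)
  else fKND κ N D a * (sK κ x / sK κ a) ^ (N - 1)

/-- The volume map `v_{K,N,D}(a) = ∫₀^a h^a_{K,N,D}`. -/
noncomputable def vKND (κ N D a : ℝ) : ℝ := ∫ x in (0:ℝ)..a, hKND κ N D a x

/-- `ω_N = π^(N/2)/Γ(N/2+1)`. -/
noncomputable def omegaN (N : ℝ) : ℝ := Real.pi ^ (N / 2) / Real.Gamma (N / 2 + 1)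

/-- `Vol_{K,N}(r) = N ω_N ∫₀^r s_κ(t)^(N-1) dt` (with `K = κ(N-1)`). -/
noncomputable def VolKN (κ N r : ℝ) : ℝ := N * omegaN N * ∫ t in (0:ℝ)..r, sK κ t ^ (N - 1)

/-- The coefficient `σ^{(s)}_{K,N-1}(θ)`, valued in `[0,∞]`. -/
noncomputable def sigmaE (K N s θ : ℝ) : ENNReal :=
  if (N - 1) * Real.pi ^ 2 ≤ K * θ ^ 2 then ⊤
  else ENNReal.ofReal (sK (K / (N - 1)) (s * θ) / sK (K / (N - 1)) θ)

/-- A nonnegative continuous function `h` on the interval `I` is an `MCP(K,N)` density. -/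
def IsMCPDensity (K N : ℝ) (I : Set ℝ) (h : ℝ → ℝ) : Prop :=
  ContinuousOn h I ∧ (∀ x ∈ I, 0 ≤ h x) ∧
    ∀ x₀ ∈ I, ∀ x₁ ∈ I, ∀ t ∈ Set.Icc (0:ℝ) 1,
      sigmaE K N (1 - t) |x₁ - x₀| ^ (N - 1) * ENNReal.ofReal (h x₀) ≤
        ENNReal.ofReal (h (t * x₁ + (1 - t) * x₀))

/-- The measure `h·𝓛¹` restricted to `[0,D]`. -/
noncomputable def mcMeasure (D : ℝ) (h : ℝ → ℝ) : Measure ℝ :=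
  (volume.restrict (Set.Icc 0 D)).withDensity fun x => ENNReal.ofReal (h x)

/-- The outer Minkowski content `μ⁺(E) = liminf_{ρ→0⁺} (μ(E^ρ) - μ(E))/ρ`. -/
noncomputable def minkContent (μ : Measure ℝ) (E : Set ℝ) : ℝ :=
  Filter.liminf (fun ρ : ℝ => ((μ (Metric.thickening ρ E)).toReal - (μ E).toReal) / ρ)
    (nhdsWithin 0 (Set.Ioi 0))

lemma sK_neg_one' : sK (-1) = Real.sinh := by
  funext θ; simp [sK, Real.sqrt_one]

lemma sK_zero' : sK 0 = id := by
  funext θ; simp [sK]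

lemma sK_one' : sK 1 = Real.sin := by
  funext θ; simp [sK, Real.sqrt_one]

set_option maxHeartbeats 1000000 in
/-- `m_a([0,r])/m_a([0,D]) ≤ r` for `0 < r ≤ a`, `a` small. -/
theorem stmt12 (N κ D : ℝ) (hN : 1 < N) (hκ : κ = -1 ∨ κ = 0 ∨ κ = 1)
    (hD : 0 < D) (hDpi : κ = 1 → D < Real.pi) :
    ∃ abar > 0, ∀ a ∈ Set.Ioo (0:ℝ) abar, ∀ r ∈ Set.Ioc (0:ℝ) a,
      (mcMeasure D (fun x => VolKN κ N D * hKND κ N D a x) (Set.Icc 0 r)).toReal /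
        (mcMeasure D (fun x => VolKN κ N D * hKND κ N D a x) (Set.Icc 0 D)).toReal ≤ r := by
  have hp : (0:ℝ) < N - 1 := by linarith
  -- continuity / zero / positivity of sK κ
  have hsc : Continuous (sK κ) := by
    rcases hκ with h | h | h <;> subst h
    · rw [sK_neg_one']; exact Real.continuous_sinh
    · rw [sK_zero']; exact continuous_id
    · rw [sK_one']; exact Real.continuous_sin
  have hs0 : sK κ 0 = 0 := by
    rcases hκ with h | h | h <;> subst h <;>
      simp [sK_neg_one', sK_zero', sK_one']
  have hspos : ∀ θ : ℝ, 0 < θ → θ ≤ D → 0 < sK κ θ := by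
    intro θ h1 h2
    rcases hκ with h | h | h <;> subst h
    · rw [sK_neg_one']; exact Real.sinh_pos_iff.2 h1
    · rw [sK_zero']; exact h1
    · rw [sK_one']; exact Real.sin_pos_of_pos_of_lt_pi h1 (h2.trans_lt (hDpi rfl))
  have hsnn : ∀ θ : ℝ, 0 ≤ θ → θ ≤ D → 0 ≤ sK κ θ := by
    intro θ h1 h2
    rcases eq_or_lt_of_le h1 with h | h
    · rw [← h, hs0]
    · exact (hspos θ h h2).le
  have hrpowc : Continuous fun x : ℝ => x ^ (N - 1) :=
    Real.continuous_rpow_const hp.le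
  have hD2 : (0:ℝ) < D / 2 := by linarith
  -- max on [0,D]
  obtain ⟨xB, hxB, hB⟩ := isCompact_Icc.exists_isMaxOn (Set.nonempty_Icc.2 hD.le)
    hsc.continuousOn
  set B := sK κ xB with hBdef
  have hBpos : 0 < B :=
    lt_of_lt_of_le (hspos D hD le_rfl) (hB (Set.right_mem_Icc.2 hD.le))
  -- min on [D/2, D]
  obtain ⟨xc, hxc, hc⟩ := isCompact_Icc.exists_isMinOn (Set.nonempty_Icc.2 (by linarith : D/2 ≤ D))
    (hsc.continuousOn.mono (Set.Icc_subset_Icc (by linarith) le_rfl))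
  set c := sK κ xc with hcdef
  have hcpos : 0 < c := hspos xc (lt_of_lt_of_le hD2 hxc.1) hxc.2
  have hcB : c ≤ B :=
    le_trans (hc (Set.right_mem_Icc.2 (by linarith : D/2 ≤ D)))
      (hB (Set.right_mem_Icc.2 hD.le))
  have hBp : 0 < B ^ (N - 1) := Real.rpow_pos_of_pos hBpos _
  have hcp : 0 < c ^ (N - 1) := Real.rpow_pos_of_pos hcpos _
  set ε := D / 2 * c ^ (N - 1) * c ^ (N - 1) / B ^ (N - 1) with hεdef
  have hε : 0 < ε := by
    apply div_pos _ hBp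
    have := mul_pos (mul_pos hD2 hcp) hcp
    linarith
  -- choose δ by continuity at 0
  have hgc : ContinuousAt (fun a : ℝ => sK κ a ^ (N - 1)) 0 :=
    (hrpowc.comp hsc).continuousAt
  have hg0 : sK κ 0 ^ (N - 1) = 0 := by
    rw [hs0]; exact Real.zero_rpow (by linarith)
  have hev : ∀ᶠ a in nhds (0:ℝ), sK κ a ^ (N - 1) < ε := by
    have := hgc.tendsto
    rw [hg0] at this
    exact this.eventually_lt_const hε
  obtain ⟨δ, hδpos, hδ⟩ := Metric.eventually_nhds_iff.1 hev
  refine ⟨min δ (D / 2), lt_min hδpos hD2, ?_⟩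
  rintro a ⟨ha0, haub⟩ r ⟨hr0, hra⟩
  have haD2 : a < D / 2 := lt_of_lt_of_le haub (min_le_right _ _)
  have hsaε : sK κ a ^ (N - 1) < ε := by
    apply hδ
    rw [Real.dist_eq, sub_zero, abs_of_pos ha0]
    exact lt_of_lt_of_le haub (min_le_left _ _)
  have hrD : r ≤ D := by linarith
  have hsa : 0 < sK κ a := hspos a ha0 (by linarith)
  have hsap : 0 < sK κ a ^ (N - 1) := Real.rpow_pos_of_pos hsa _
  have hsDa : c ≤ sK κ (D - a) := hc ⟨by linarith, by linarith⟩
  -- nonnegativity of C and f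
  set C := VolKN κ N D with hCdef
  set f := fKND κ N D a with hfdef
  have hCnn : 0 ≤ C := by
    rw [hCdef, VolKN]
    apply mul_nonneg (mul_nonneg (by linarith) _)
    · apply intervalIntegral.integral_nonneg hD.le
      intro u hu
      exact Real.rpow_nonneg (hsnn u hu.1 hu.2) _
    · rw [omegaN]
      apply div_nonneg (Real.rpow_nonneg Real.pi_pos.le _)
        (Real.Gamma_pos_of_pos (by linarith)).le
  have hfnn : 0 ≤ f := by
    rw [hfdef, fKND]
    apply inv_nonneg.2
    apply add_nonneg
    · apply intervalIntegral.integral_nonneg ha0.le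
      intro y hy
      apply Real.rpow_nonneg
      exact div_nonneg (hsnn _ (by linarith [hy.2]) (by linarith [hy.1]))
        (hsnn _ (by linarith) (by linarith))
    · apply intervalIntegral.integral_nonneg (by linarith)
      intro y hy
      apply Real.rpow_nonneg
      exact div_nonneg (hsnn _ (by linarith [hy.1]) hy.2) hsa.le
  have hCf : 0 ≤ C * f := mul_nonneg hCnn hfnn
  -- measurability of the density
  have hmR : Measurable fun x => C * hKND κ N D a x := by
    have h1 : Continuous fun x : ℝ =>
        C * (fKND κ N D a * (sK κ (D - x) / sK κ (D - a)) ^ (N - 1)) := by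
      apply continuous_const.mul
      apply continuous_const.mul
      exact hrpowc.comp ((hsc.comp (continuous_const.sub continuous_id)).div_const _)
    have h2 : Continuous fun x : ℝ =>
        C * (fKND κ N D a * (sK κ x / sK κ a) ^ (N - 1)) := by
      apply continuous_const.mul
      apply continuous_const.mul
      exact hrpowc.comp (hsc.div_const _)
    have heq : (fun x => C * hKND κ N D a x) = fun x =>
        if x ≤ a then C * (fKND κ N D a * (sK κ (D - x) / sK κ (D - a)) ^ (N - 1))
        else C * (fKND κ N D a * (sK κ x / sK κ a) ^ (N - 1)) := by
      funext x
      rw [hKND]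
      split <;> rfl
    rw [heq]
    exact Measurable.ite (measurableSet_le measurable_id measurable_const)
      h1.measurable h2.measurable
  have hmE : Measurable fun x => ENNReal.ofReal (C * hKND κ N D a x) :=
    ENNReal.measurable_ofReal.comp hmR
  set μ := mcMeasure D fun x => C * hKND κ N D a x with hμdef
  have hμr : μ (Set.Icc 0 r) =
      ∫⁻ x in Set.Icc 0 r, ENNReal.ofReal (C * hKND κ N D a x) := by
    rw [hμdef, mcMeasure, withDensity_apply _ measurableSet_Icc,
      Measure.restrict_restrict measurableSet_Icc, Set.Icc_inter_Icc, max_self,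
      min_eq_left hrD]
  have hμD : μ (Set.Icc 0 D) =
      ∫⁻ x in Set.Icc 0 D, ENNReal.ofReal (C * hKND κ N D a x) := by
    rw [hμdef, mcMeasure, withDensity_apply _ measurableSet_Icc,
      Measure.restrict_restrict measurableSet_Icc, Set.inter_self]
  set M := (B / c) ^ (N - 1) with hMdef
  have hMnn : 0 ≤ M := Real.rpow_nonneg (div_nonneg hBpos.le hcpos.le) _
  -- upper bound on the numerator
  have hub : μ (Set.Icc 0 r) ≤ ENNReal.ofReal (C * f * M * r) := by
    rw [hμr]
    calc ∫⁻ x in Set.Icc 0 r, ENNReal.ofReal (C * hKND κ N D a x)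
        ≤ ∫⁻ _ in Set.Icc 0 r, ENNReal.ofReal (C * f * M) := by
          apply setLIntegral_mono measurable_const
          intro x hx
          apply ENNReal.ofReal_le_ofReal
          rw [hKND, if_pos (hx.2.trans hra)]
          have hq : (sK κ (D - x) / sK κ (D - a)) ^ (N - 1) ≤ M := by
            rw [hMdef]
            apply Real.rpow_le_rpow
            · exact div_nonneg (hsnn _ (by linarith [hx.2]) (by linarith [hx.1]))
                (hsnn _ (by linarith) (by linarith))
            · exact div_le_div₀ hBpos.le
                (hB ⟨by linarith [hx.2], by linarith [hx.1]⟩) hcpos hsDa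
            · linarith
          have hqnn : 0 ≤ (sK κ (D - x) / sK κ (D - a)) ^ (N - 1) :=
            Real.rpow_nonneg (div_nonneg
              (hsnn _ (by linarith [hx.2]) (by linarith [hx.1]))
              (hsnn _ (by linarith) (by linarith))) _
          rw [← hfdef]
          nlinarith [mul_le_mul_of_nonneg_left hq hCf]
      _ = ENNReal.ofReal (C * f * M) * volume (Set.Icc 0 r) := setLIntegral_const _ _
      _ = ENNReal.ofReal (C * f * M * r) := by
          rw [Real.volume_Icc, sub_zero,
            ← ENNReal.ofReal_mul (mul_nonneg hCf hMnn)]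
  -- lower bound on the denominator
  set L := C * f * (c / sK κ a) ^ (N - 1) * (D / 2) with hLdef
  have hLq : 0 ≤ C * f * (c / sK κ a) ^ (N - 1) :=
    mul_nonneg hCf (Real.rpow_nonneg (div_nonneg hcpos.le hsa.le) _)
  have hlb : ENNReal.ofReal L ≤ μ (Set.Icc 0 D) := by
    rw [hμD]
    calc ENNReal.ofReal L
        = ENNReal.ofReal (C * f * (c / sK κ a) ^ (N - 1)) * volume (Set.Icc (D/2) D) := by
          rw [Real.volume_Icc, show D - D / 2 = D / 2 by ring, hLdef,
            ← ENNReal.ofReal_mul hLq]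
      _ = ∫⁻ _ in Set.Icc (D/2) D,
            ENNReal.ofReal (C * f * (c / sK κ a) ^ (N - 1)) := (setLIntegral_const _ _).symm
      _ ≤ ∫⁻ x in Set.Icc (D/2) D, ENNReal.ofReal (C * hKND κ N D a x) := by
          apply setLIntegral_mono hmE
          intro x hx
          apply ENNReal.ofReal_le_ofReal
          rw [hKND, if_neg (not_le.2 (lt_of_lt_of_le haD2 hx.1))]
          have hq : (c / sK κ a) ^ (N - 1) ≤ (sK κ x / sK κ a) ^ (N - 1) := by
            apply Real.rpow_le_rpow (div_nonneg hcpos.le hsa.le)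
            · exact (div_le_div_iff_of_pos_right hsa).2 (hc hx)
            · linarith
          rw [← hfdef]
          nlinarith [mul_le_mul_of_nonneg_left hq hCf]
      _ ≤ ∫⁻ x in Set.Icc 0 D, ENNReal.ofReal (C * hKND κ N D a x) :=
          lintegral_mono_set (Set.Icc_subset_Icc (by linarith) le_rfl)
  -- conclude
  rcases eq_or_lt_of_le (ENNReal.toReal_nonneg :
      (0:ℝ) ≤ (μ (Set.Icc 0 D)).toReal) with hQ0 | hQpos
  · rw [← hQ0, div_zero]; exact hr0.le
  · rw [div_le_iff₀ hQpos]
    have hT : μ (Set.Icc 0 D) ≠ ⊤ := by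
      intro h
      rw [h] at hQpos
      simp at hQpos
    have hQL : L ≤ (μ (Set.Icc 0 D)).toReal :=
      (ENNReal.ofReal_le_iff_le_toReal hT).1 hlb
    have hPle : (μ (Set.Icc 0 r)).toReal ≤ C * f * M * r :=
      ENNReal.toReal_le_of_le_ofReal
        (mul_nonneg (mul_nonneg hCf hMnn) hr0.le) hub
    -- key: M ≤ (c / sK κ a)^(N-1) * (D/2)
    have h1 : sK κ a ^ (N - 1) * B ^ (N - 1) < D / 2 * c ^ (N - 1) * c ^ (N - 1) := by
      have h2 := mul_lt_mul_of_pos_right hsaε hBp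
      rwa [hεdef, div_mul_cancel₀ _ (ne_of_gt hBp)] at h2
    have hkey : M ≤ (c / sK κ a) ^ (N - 1) * (D / 2) := by
      rw [hMdef, Real.div_rpow hBpos.le hcpos.le, Real.div_rpow hcpos.le hsa.le,
        div_mul_eq_mul_div, div_le_div_iff₀ hcp hsap]
      nlinarith [h1]
    calc (μ (Set.Icc 0 r)).toReal ≤ C * f * M * r := hPle
      _ ≤ r * L := by
          rw [hLdef]
          nlinarith [mul_le_mul_of_nonneg_left hkey hCf]
      _ ≤ r * (μ (Set.Icc 0 D)).toReal :=
          mul_le_mul_of_nonneg_left hQL hr0.le
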